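/- Let x be an element of a (twisted) Weyl group that is at good position with respect to (Φ⁺, θ̄) for an admissible sequence θ̄ = (θ₁,…,θ_r). Then x is convex for Φ⁺ and Φ(x) = Φ^x := {γ ∈ Φ : x(γ) = γ}. -/

import Mathlib

open Pointwise

variable {V : Type*} [NormedAddCommGroup V] [InnerProductSpace ℝ V]

/-- minimal `i ≥ 1` with `(x^i) γ ∈ Φneg` (or `0` if none exists). -/
noncomputable def nx (x : V ≃ₗᵢ[ℝ] V) (Φneg : Set V) (γ : V) : ℕ :=
  sInf {i : ℕ | 1 ≤ i ∧ (x ^ i) γ ∈ Φneg}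

/-- `Φ(x)`: roots whose sign is preserved by all powers of `x`. -/
def PhiXI (x : V ≃ₗᵢ[ℝ] V) (Φpos : Set V) : Set V :=
  {γ ∈ Φpos ∪ -Φpos | ∀ i : ℤ, ((x ^ i) γ ∈ Φpos ↔ γ ∈ Φpos)}

/-- `V_x^θ = {v | x v + x⁻¹ v = 2 cos θ • v}`. -/
def Vtheta (x : V ≃ₗᵢ[ℝ] V) (θ : ℝ) : Set V :=
  {v | x v + x.symm v = (2 * Real.cos θ) • v}

/-- sum of the `V_x^θ` over a list of angles. -/
noncomputable def sumV (x : V ≃ₗᵢ[ℝ] V) (l : List ℝ) : Set V :=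
  l.foldr (fun θ S => Vtheta x θ + S) {0}

/-- `e` is a `Φ`-regular point of `S`: `e ∈ S` and every root hyperplane
through `e` contains `S`. -/
def RegIn (Φ S : Set V) (e : V) : Prop :=
  e ∈ S ∧ ∀ γ ∈ Φ, (inner ℝ e γ : ℝ) = 0 → ∀ v ∈ S, (inner ℝ v γ : ℝ) = 0

/-- `l` is a `Φ`-admissible sequence for `x`: all angles lie in `(0, π]` and
`Σ_j V_x^{θ_j}` contains a `Φ`-regular point of `(V^x)^⊥`. -/
noncomputable def AdmissibleI (Φpos : Set V) (x : V ≃ₗᵢ[ℝ] V) (l : List ℝ) : Prop :=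
  (∀ θ ∈ l, 0 < θ ∧ θ ≤ Real.pi) ∧
  ∃ e, e ∈ sumV x l ∧
    RegIn (Φpos ∪ -Φpos) {v | ∀ w : V, x w = w → (inner ℝ v w : ℝ) = 0} e

/-- `x` is at good position with respect to `(Φ⁺, l)`: for each `k`, the
closed dominant chamber contains a `Φ`-regular point of `Σ_{j ≤ k} V_x^{θ_j}`. -/
noncomputable def GoodPosI (Φpos : Set V) (x : V ≃ₗᵢ[ℝ] V) (l : List ℝ) : Prop :=
  ∀ k : ℕ, 1 ≤ k → k ≤ l.length →
    ∃ e, (∀ a ∈ Φpos, 0 ≤ (inner ℝ e a : ℝ)) ∧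
      RegIn (Φpos ∪ -Φpos) (sumV x (l.take k)) e

/-- quasi-convexity of `x` for `Φ⁺` with simple system `Δ`. -/
noncomputable def QuasiConvexI (Φpos Δ : Set V) (x : V ≃ₗᵢ[ℝ] V) : Prop :=
  (∃ J ⊆ Δ, PhiXI x Φpos = (Φpos ∪ -Φpos) ∩ (AddSubgroup.closure J : Set V)) ∧
  ∀ a ∈ Φpos \ PhiXI x Φpos, ∀ b ∈ Φpos \ PhiXI x Φpos,
    a + b ∈ Φpos → a + b ∉ PhiXI x Φpos →
    nx x (-Φpos) (a + b) ≤ max (nx x (-Φpos) a) (nx x (-Φpos) b)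

/-!
Let `E` be a dominant regular point of `Σ_j V_x^{θ_j}`. Admissibility makes the roots orthogonal
to `E` exactly the roots fixed by `x`, and since `E ⊥ V^x`, pairing `E` with the orbit sum of a
positive root that is not fixed shows that some power of `x` makes it negative. This gives
`Φ(x) = Φ^x`, and `Φ^x` is the standard parabolic subsystem spanned by the simple roots
orthogonal to `E`.

For the convexity inequality take a dominant regular point `e` of `V_x^{θ₁}`. For a root `γ`
the numbers `g γ i = ⟪e, x^i γ⟫` satisfy `g γ (i+2) = 2 cos θ₁ · g γ (i+1) - g γ i` and have the
sign of `x^i γ`, unless `γ` lies in `Ψ = (V_x^{θ₁})^⊥`, where they vanish. Two solutions of this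
recurrence have a constant Wronskian, and the sign of the Wronskian decides which of the two
changes sign first (discrete Sturm comparison); since `W(a, a+b) = -W(b, a+b)`, `a + b` changes
sign no later than one of `a`, `b`. Roots in `Ψ` form a parabolic subsystem at good position
with respect to `(θ₂, …, θ_r)`, which is handled by induction on `r`.
-/

local notation "⟪" a ", " b "⟫" => (inner ℝ a b : ℝ)

/-- The first index `i ≥ 1` with `f i < 0`, and `0` if there is none. -/
noncomputable def firstNeg (f : ℕ → ℝ) : ℕ :=
  sInf {i | 1 ≤ i ∧ f i < 0}

section Wronskian

variable {c : ℝ} {f h : ℕ → ℝ}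

theorem pos_of_lt_firstNeg (h0 : 0 < f 0) (hne : ∀ i, f i ≠ 0) {i : ℕ} (hi : i < firstNeg f) :
    0 < f i := by
  rcases Nat.eq_zero_or_pos i with rfl | hi1
  · exact h0
  · have hnot : ¬(1 ≤ i ∧ f i < 0) := Nat.notMem_of_lt_sInf hi
    exact lt_of_le_of_ne (not_lt.1 fun hneg => hnot ⟨hi1, hneg⟩) (hne i).symm

theorem wronskian_eq (hf : ∀ i, f (i + 2) = c * f (i + 1) - f i)
    (hh : ∀ i, h (i + 2) = c * h (i + 1) - h i) (i : ℕ) :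
    f i * h (i + 1) - f (i + 1) * h i = f 0 * h 1 - f 1 * h 0 := by
  induction i with
  | zero => rfl
  | succ k ih =>
    rw [show k + 1 + 1 = k + 2 from rfl, hf, hh]
    linear_combination ih

theorem firstNeg_le_of_wronskian_nonpos (hf : ∀ i, f (i + 2) = c * f (i + 1) - f i)
    (hh : ∀ i, h (i + 2) = c * h (i + 1) - h i) (hf0 : 0 < f 0) (hh0 : 0 < h 0)
    (hfne : ∀ i, f i ≠ 0) (hhne : ∀ i, h i ≠ 0) (hW : f 0 * h 1 - f 1 * h 0 ≤ 0)
    (hneg : ∃ i, 1 ≤ i ∧ f i < 0) : firstNeg h ≤ firstNeg f := by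
  obtain ⟨hn1, hfn⟩ : 1 ≤ firstNeg f ∧ f (firstNeg f) < 0 := Nat.sInf_mem hneg
  obtain ⟨n, hn⟩ : ∃ n, firstNeg f = n + 1 := ⟨firstNeg f - 1, by omega⟩
  rw [hn] at hfn
  by_contra! hlt
  have hfpos := pos_of_lt_firstNeg hf0 hfne (i := n) (by omega)
  have hhpos := pos_of_lt_firstNeg hh0 hhne (i := n) (by omega)
  have hhpos' := pos_of_lt_firstNeg hh0 hhne (i := n + 1) (by omega)
  nlinarith [wronskian_eq hf hh n, mul_pos hfpos hhpos', mul_neg_of_neg_of_pos hfn hhpos]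

/-- Discrete form of the rotation lemma. -/
theorem firstNeg_add_le_max (hf : ∀ i, f (i + 2) = c * f (i + 1) - f i)
    (hh : ∀ i, h (i + 2) = c * h (i + 1) - h i) (hf0 : 0 < f 0) (hh0 : 0 < h 0)
    (hfne : ∀ i, f i ≠ 0) (hhne : ∀ i, h i ≠ 0) (hfhne : ∀ i, (f + h) i ≠ 0)
    (hnf : ∃ i, 1 ≤ i ∧ f i < 0) (hnh : ∃ i, 1 ≤ i ∧ h i < 0) :
    firstNeg (f + h) ≤ max (firstNeg f) (firstNeg h) := by
  have hfh : ∀ i, (f + h) (i + 2) = c * (f + h) (i + 1) - (f + h) i := fun i => by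
    simp only [Pi.add_apply, hf, hh]; ring
  have hfh0 : 0 < (f + h) 0 := add_pos hf0 hh0
  rcases le_total (f 0 * h 1 - f 1 * h 0) 0 with hW | hW
  · refine (firstNeg_le_of_wronskian_nonpos hf hfh hf0 hfh0 hfne hfhne ?_ hnf).trans
      (le_max_left _ _)
    simp only [Pi.add_apply]; linear_combination hW
  · refine (firstNeg_le_of_wronskian_nonpos hh hfh hh0 hfh0 hhne hfhne ?_ hnh).trans
      (le_max_right _ _)
    simp only [Pi.add_apply]; linear_combination hW

end Wronskian

namespace LinearIsometryEquiv

section Powers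

variable {R E : Type*} [Semiring R] [SeminormedAddCommGroup E] [Module R E] (x : E ≃ₗᵢ[R] E)

theorem coe_pow (n : ℕ) : ⇑(x ^ n) = (⇑x)^[n] :=
  hom_coe_pow _ rfl (fun _ _ => rfl) _ _

theorem pow_succ_apply (n : ℕ) (v : E) : (x ^ (n + 1)) v = x ((x ^ n) v) := by
  rw [pow_succ', coe_mul, Function.comp_apply]

variable {x}

theorem zpow_apply_eq_self {v : E} (h : x v = v) (i : ℤ) : (x ^ i) v = v := by
  induction i using Int.induction_on with
  | zero => rfl
  | succ n ih => rw [zpow_add_one, coe_mul, Function.comp_apply, h, ih]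
  | pred n ih =>
    rw [zpow_sub_one, coe_mul, Function.comp_apply, coe_inv, x.symm_apply_eq.2 h.symm, ih]

theorem pow_apply_eq_self {v : E} (h : x v = v) (n : ℕ) : (x ^ n) v = v := by
  simpa using zpow_apply_eq_self h n

theorem pow_apply_mem {s : Set E} (hs : x '' s = s) {v : E} (hv : v ∈ s) (n : ℕ) :
    (x ^ n) v ∈ s := by
  have hmaps : Set.MapsTo x s s := by simpa only [hs] using Set.mapsTo_image x s
  rw [coe_pow]
  exact hmaps.iterate n hv

theorem apply_sum_range_pow {m : ℕ} (hm : x ^ m = 1) (v : E) :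
    x (∑ i ∈ Finset.range m, (x ^ i) v) = ∑ i ∈ Finset.range m, (x ^ i) v := by
  have hshift := Finset.sum_range_succ' (fun i => (x ^ i) v) m
  rw [Finset.sum_range_succ, hm, pow_zero] at hshift
  rw [map_sum, add_right_cancel hshift]
  exact Finset.sum_congr rfl fun i _ => (x.pow_succ_apply i v).symm

end Powers

end LinearIsometryEquiv

section FixedVectors

variable {x : V ≃ₗᵢ[ℝ] V}

theorem sumV_nil : sumV x [] = {0} := rfl

theorem sumV_cons (θ : ℝ) (l : List ℝ) : sumV x (θ :: l) = Vtheta x θ + sumV x l := rfl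

theorem sumV_singleton (θ : ℝ) : sumV x [θ] = Vtheta x θ := by
  rw [sumV_cons, sumV_nil, Set.singleton_zero, add_zero]

theorem zero_mem_Vtheta (θ : ℝ) : (0 : V) ∈ Vtheta x θ := by
  simp [Vtheta]

theorem map_mem_Vtheta_iff {θ : ℝ} {v : V} : x v ∈ Vtheta x θ ↔ v ∈ Vtheta x θ := by
  simp only [Vtheta, Set.mem_ofPred_eq, LinearIsometryEquiv.symm_apply_apply]
  conv_rhs => rw [← x.injective.eq_iff, map_add, map_smul, x.apply_symm_apply]

theorem inner_eq_zero_of_mem_Vtheta {θ : ℝ} (hθ : 0 < θ ∧ θ ≤ Real.pi) {v w : V}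
    (hv : v ∈ Vtheta x θ) (hw : x w = w) : ⟪v, w⟫ = 0 := by
  have hcos : Real.cos θ < 1 := by
    simpa using Real.cos_lt_cos_of_nonneg_of_le_pi le_rfl hθ.2 hθ.1
  have hpair : ⟪x v + x.symm v, w⟫ = 2 * ⟪v, w⟫ := by
    rw [inner_add_left, x.inner_map_eq_flip, x.symm.inner_map_eq_flip,
      LinearIsometryEquiv.symm_symm, x.symm_apply_eq.2 hw.symm, hw]
    ring
  have hv' : x v + x.symm v = (2 * Real.cos θ) • v := hv
  rw [hv', real_inner_smul_left] at hpair
  nlinarith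

theorem inner_eq_zero_of_mem_sumV {l : List ℝ} (hl : ∀ θ ∈ l, 0 < θ ∧ θ ≤ Real.pi) {v w : V}
    (hv : v ∈ sumV x l) (hw : x w = w) : ⟪v, w⟫ = 0 := by
  induction l generalizing v with
  | nil =>
    rw [sumV_nil, Set.mem_singleton_iff] at hv
    rw [hv, inner_zero_left]
  | cons θ t ih =>
    rw [sumV_cons] at hv
    obtain ⟨u, hu, u', hu', rfl⟩ := Set.mem_add.1 hv
    rw [inner_add_left, inner_eq_zero_of_mem_Vtheta (hl θ List.mem_cons_self) hu hw,
      ih (fun θ' hθ' => hl θ' (List.mem_cons_of_mem θ hθ')) hu', add_zero]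

theorem apply_eq_self_of_regIn [FiniteDimensional ℝ V] {Φ : Set V} {e γ : V}
    (he : RegIn Φ {v | ∀ w : V, x w = w → ⟪v, w⟫ = 0} e) (hγ : γ ∈ Φ) (h0 : ⟪e, γ⟫ = 0) :
    x γ = γ := by
  have hγ' : γ ∈ (LinearMap.eqLocus x.toLinearMap LinearMap.id)ᗮᗮ :=
    (Submodule.mem_orthogonal _ _).2 fun u hu =>
      he.2 γ hγ h0 u fun w hw => (Submodule.mem_orthogonal' _ _).1 hu w hw
  rwa [Submodule.orthogonal_orthogonal] at hγ'

end FixedVectors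

section FixedRoots

variable {Φpos : Set V} {x : V ≃ₗᵢ[ℝ] V}

theorem exists_dominant_of_goodPosI [FiniteDimensional ℝ V] {l : List ℝ}
    (hadm : AdmissibleI Φpos x l) (hgp : GoodPosI Φpos x l) :
    ∃ E : V, (∀ a ∈ Φpos, 0 ≤ ⟪E, a⟫) ∧ (∀ γ ∈ Φpos ∪ -Φpos, ⟪E, γ⟫ = 0 → x γ = γ) ∧
      ∀ w, x w = w → ⟪E, w⟫ = 0 := by
  obtain ⟨hl, e, he, hreg⟩ := hadm
  obtain ⟨E, hdom, hE⟩ :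
      ∃ E, (∀ a ∈ Φpos, 0 ≤ ⟪E, a⟫) ∧ RegIn (Φpos ∪ -Φpos) (sumV x l) E := by
    cases l with
    | nil =>
      refine ⟨0, fun a _ => (inner_zero_left a).ge, rfl, fun γ _ _ v hv => ?_⟩
      rw [sumV_nil, Set.mem_singleton_iff] at hv
      rw [hv, inner_zero_left]
    | cons θ t => simpa using hgp (t.length + 1) (by omega) le_rfl
  exact ⟨E, hdom, fun γ hγ h0 => apply_eq_self_of_regIn hreg hγ (hE.2 γ hγ h0 e he),
    fun w hw => inner_eq_zero_of_mem_sumV hl hE.1 hw⟩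

theorem exists_pow_mem_neg (hx : x '' (Φpos ∪ -Φpos) = Φpos ∪ -Φpos) {m : ℕ} (hm : 1 ≤ m)
    (hxm : x ^ m = 1) {E : V} (hdom : ∀ a ∈ Φpos, 0 ≤ ⟪E, a⟫)
    (hfix : ∀ γ ∈ Φpos ∪ -Φpos, ⟪E, γ⟫ = 0 → x γ = γ) (hperp : ∀ w, x w = w → ⟪E, w⟫ = 0)
    {γ : V} (hγ : γ ∈ Φpos) (hne : x γ ≠ γ) : ∃ i, 1 ≤ i ∧ (x ^ i) γ ∈ -Φpos := by
  by_contra! hpos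
  have horbit : ∀ i, (x ^ i) γ ∈ Φpos := by
    intro i
    rcases Nat.eq_zero_or_pos i with rfl | hi
    · exact hγ
    · exact (x.pow_apply_mem hx (Or.inl hγ) i).resolve_right (hpos i hi)
  have hsum : ∑ i ∈ Finset.range m, ⟪E, (x ^ i) γ⟫ = 0 := by
    rw [← inner_sum]
    exact hperp _ (x.apply_sum_range_pow hxm γ)
  have hγ0 := (Finset.sum_eq_zero_iff_of_nonneg fun i _ => hdom _ (horbit i)).1 hsum 0
    (Finset.mem_range.2 hm)
  exact hne (hfix γ (Or.inl hγ) (by simpa using hγ0))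

theorem phiXI_eq_of_exists_pow_mem_neg (hdisj : Disjoint Φpos (-Φpos))
    (hneg : ∀ γ ∈ Φpos, x γ ≠ γ → ∃ i, 1 ≤ i ∧ (x ^ i) γ ∈ -Φpos) :
    PhiXI x Φpos = {γ ∈ Φpos ∪ -Φpos | x γ = γ} := by
  ext γ
  refine ⟨fun ⟨hγ, hsign⟩ => ⟨hγ, ?_⟩, fun ⟨hγ, hfix⟩ => ⟨hγ, fun i => by
    rw [LinearIsometryEquiv.zpow_apply_eq_self hfix]⟩⟩
  by_contra hne
  rcases hγ with hγ | hγ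
  · obtain ⟨i, -, hi⟩ := hneg γ hγ hne
    have hpos : (x ^ (i : ℤ)) γ ∈ Φpos := (hsign i).2 hγ
    exact Set.disjoint_left.1 hdisj (by simpa using hpos) hi
  · obtain ⟨i, -, hi⟩ := hneg (-γ) hγ (by rwa [map_neg, ne_eq, neg_inj])
    have hpos : (x ^ (i : ℤ)) γ ∈ Φpos := by simpa using hi
    exact Set.disjoint_left.1 hdisj ((hsign i).1 hpos) hγ

theorem inner_eq_zero_of_mem_closure {Δ : Set V} {E v : V}
    (hv : v ∈ AddSubgroup.closure {a ∈ Δ | ⟪E, a⟫ = 0}) : ⟪E, v⟫ = 0 := by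
  induction hv using AddSubgroup.closure_induction with
  | mem a ha => exact ha.2
  | zero => exact inner_zero_right E
  | add p q _ _ hp hq => rw [inner_add_right, hp, hq, add_zero]
  | neg p _ hp => rw [inner_neg_right, hp, neg_zero]

theorem mem_closure_iff_inner_eq_zero {Δ : Set V} {E : V} (hdom : ∀ a ∈ Δ, 0 ≤ ⟪E, a⟫) {v : V}
    (hv : v ∈ AddSubmonoid.closure Δ) :
    v ∈ AddSubgroup.closure {a ∈ Δ | ⟪E, a⟫ = 0} ↔ ⟪E, v⟫ = 0 := by
  refine ⟨inner_eq_zero_of_mem_closure, fun h0 => ?_⟩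
  suffices ∀ v ∈ AddSubmonoid.closure Δ, 0 ≤ ⟪E, v⟫ ∧
      (⟪E, v⟫ = 0 → v ∈ AddSubgroup.closure {a ∈ Δ | ⟪E, a⟫ = 0}) from (this v hv).2 h0
  intro v hv
  induction hv using AddSubmonoid.closure_induction with
  | mem a ha => exact ⟨hdom a ha, fun h0 => AddSubgroup.subset_closure ⟨ha, h0⟩⟩
  | zero => exact ⟨(inner_zero_right E).ge, fun _ => zero_mem _⟩
  | add p q _ _ hp hq =>
    rw [inner_add_right]
    refine ⟨add_nonneg hp.1 hq.1, fun h0 => add_mem (hp.2 ?_) (hq.2 ?_)⟩ <;>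
      linarith [hp.1, hq.1]

theorem phiXI_eq_inter_closure {Δ : Set V} (hΔ : Δ ⊆ Φpos)
    (hcoeff : ∀ γ ∈ Φpos, γ ∈ AddSubmonoid.closure Δ) {E : V} (hdom : ∀ a ∈ Φpos, 0 ≤ ⟪E, a⟫)
    (hfix : ∀ γ ∈ Φpos ∪ -Φpos, ⟪E, γ⟫ = 0 → x γ = γ) (hperp : ∀ w, x w = w → ⟪E, w⟫ = 0)
    (hphi : PhiXI x Φpos = {γ ∈ Φpos ∪ -Φpos | x γ = γ}) :
    PhiXI x Φpos = (Φpos ∪ -Φpos) ∩ AddSubgroup.closure {a ∈ Δ | ⟪E, a⟫ = 0} := by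
  have hdomΔ : ∀ a ∈ Δ, 0 ≤ ⟪E, a⟫ := fun a ha => hdom a (hΔ ha)
  rw [hphi]
  ext γ
  refine and_congr_right fun hγ => (Iff.intro (hperp γ) (hfix γ hγ)).trans ?_
  rcases hγ with hγ | hγ
  · exact (mem_closure_iff_inner_eq_zero hdomΔ (hcoeff γ hγ)).symm
  · rw [SetLike.mem_coe, ← neg_mem_iff, mem_closure_iff_inner_eq_zero hdomΔ (hcoeff _ hγ),
      inner_neg_right, neg_eq_zero]

end FixedRoots

/-- `(V_x^θ)^⊥`; its roots form the parabolic subsystem `Ψ` of the paper. -/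
def vthetaPerp (x : V ≃ₗᵢ[ℝ] V) (θ : ℝ) : Submodule ℝ V where
  carrier := {γ | ∀ v ∈ Vtheta x θ, ⟪v, γ⟫ = 0}
  add_mem' ha hb v hv := by rw [inner_add_right, ha v hv, hb v hv, add_zero]
  zero_mem' v _ := inner_zero_right v
  smul_mem' c γ hγ v hv := by rw [inner_smul_right, hγ v hv, mul_zero]

section Parabolic

variable {x : V ≃ₗᵢ[ℝ] V} {θ : ℝ} {Φpos : Set V}

theorem map_mem_vthetaPerp_iff {γ : V} : x γ ∈ vthetaPerp x θ ↔ γ ∈ vthetaPerp x θ := by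
  refine ⟨fun h v hv => ?_, fun h v hv => ?_⟩
  · rw [← x.inner_map_map]
    exact h _ (map_mem_Vtheta_iff.2 hv)
  · rw [← x.apply_symm_apply v, x.inner_map_map]
    exact h _ (map_mem_Vtheta_iff.1 (by rwa [x.apply_symm_apply]))

theorem pow_apply_mem_vthetaPerp_iff {γ : V} (n : ℕ) :
    (x ^ n) γ ∈ vthetaPerp x θ ↔ γ ∈ vthetaPerp x θ := by
  induction n with
  | zero => rfl
  | succ n ih =>
    rw [LinearIsometryEquiv.coe_pow, Function.iterate_succ_apply',
      ← LinearIsometryEquiv.coe_pow, map_mem_vthetaPerp_iff, ih]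

theorem image_vthetaPerp : x '' (vthetaPerp x θ) = vthetaPerp x θ := by
  rw [x.image_eq_preimage_symm]
  ext γ
  rw [Set.mem_preimage, SetLike.mem_coe, SetLike.mem_coe, ← map_mem_vthetaPerp_iff,
    x.apply_symm_apply]

theorem union_neg_inter_submodule (s : Set V) (K : Submodule ℝ V) :
    (s ∩ K) ∪ -(s ∩ K) = (s ∪ -s) ∩ K := by
  rw [Set.inter_neg, neg_coe_set, Set.union_inter_distrib_right]

theorem image_union_neg_inter_vthetaPerp (hx : x '' (Φpos ∪ -Φpos) = Φpos ∪ -Φpos) :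
    x '' ((Φpos ∩ vthetaPerp x θ) ∪ -(Φpos ∩ vthetaPerp x θ)) =
      (Φpos ∩ vthetaPerp x θ) ∪ -(Φpos ∩ vthetaPerp x θ) := by
  rw [union_neg_inter_submodule, Set.image_inter x.injective, hx, image_vthetaPerp]

theorem pow_apply_mem_neg_inter_iff {γ : V} (hγ : γ ∈ vthetaPerp x θ) (n : ℕ) :
    (x ^ n) γ ∈ -(Φpos ∩ vthetaPerp x θ) ↔ (x ^ n) γ ∈ -Φpos := by
  rw [Set.inter_neg, neg_coe_set, Set.mem_inter_iff, SetLike.mem_coe,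
    pow_apply_mem_vthetaPerp_iff, and_iff_left hγ]

theorem nx_inter_vthetaPerp {γ : V} (hγ : γ ∈ vthetaPerp x θ) :
    nx x (-(Φpos ∩ vthetaPerp x θ)) γ = nx x (-Φpos) γ := by
  simp only [nx, pow_apply_mem_neg_inter_iff hγ]

theorem RegIn.of_add {Φ Φ' S T : Set V} {u w : V} (h : RegIn Φ S (u + w)) (hΦ' : Φ' ⊆ Φ)
    (hu : ∀ γ ∈ Φ', ⟪u, γ⟫ = 0) (hw : w ∈ T) (hT : T ⊆ S) : RegIn Φ' T w :=
  ⟨hw, fun γ hγ h0 v hv =>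
    h.2 γ (hΦ' hγ) (by rw [inner_add_left, hu γ hγ, h0, add_zero]) v (hT hv)⟩

theorem AdmissibleI.restrict {t : List ℝ} (h : AdmissibleI Φpos x (θ :: t)) :
    AdmissibleI (Φpos ∩ vthetaPerp x θ) x t := by
  obtain ⟨hl, e, he, hreg⟩ := h
  rw [sumV_cons] at he
  obtain ⟨u, hu, w, hw, rfl⟩ := Set.mem_add.1 he
  have ht : ∀ θ' ∈ t, 0 < θ' ∧ θ' ≤ Real.pi := fun θ' hθ' => hl θ' (List.mem_cons_of_mem θ hθ')
  refine ⟨ht, w, hw, ?_⟩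
  rw [union_neg_inter_submodule]
  exact hreg.of_add Set.inter_subset_left (fun γ hγ => hγ.2 u hu)
    (fun _ hw' => inner_eq_zero_of_mem_sumV ht hw hw') subset_rfl

theorem GoodPosI.restrict {t : List ℝ} (h : GoodPosI Φpos x (θ :: t)) :
    GoodPosI (Φpos ∩ vthetaPerp x θ) x t := by
  intro k hk hkt
  obtain ⟨e, hdom, hreg⟩ := h (k + 1) (by omega) (by simpa using hkt)
  rw [List.take_succ_cons, sumV_cons] at hreg
  obtain ⟨u, hu, w, hw, rfl⟩ := Set.mem_add.1 hreg.1
  refine ⟨w, fun a ha => ?_, ?_⟩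
  · simpa only [inner_add_left, ha.2 u hu, zero_add] using hdom a ha.1
  · rw [union_neg_inter_submodule]
    exact hreg.of_add Set.inter_subset_left (fun γ hγ => hγ.2 u hu) hw
      (Set.subset_add_right _ (zero_mem_Vtheta θ))

end Parabolic

section InductionStep

variable {x : V ≃ₗᵢ[ℝ] V} {θ : ℝ} {Φpos : Set V} {e : V}

theorem inner_pow_add_two (he : e ∈ Vtheta x θ) (γ : V) (i : ℕ) :
    ⟪e, (x ^ (i + 2)) γ⟫ = 2 * Real.cos θ * ⟪e, (x ^ (i + 1)) γ⟫ - ⟪e, (x ^ i) γ⟫ := by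
  have he' : x e + x.symm e = (2 * Real.cos θ) • e := he
  have hpair := congrArg (fun v => ⟪v, (x ^ (i + 1)) γ⟫) he'
  have h1 : ⟪x e, (x ^ (i + 1)) γ⟫ = ⟪e, (x ^ i) γ⟫ := by
    rw [x.pow_succ_apply, x.inner_map_map]
  have h2 : ⟪x.symm e, (x ^ (i + 1)) γ⟫ = ⟪e, (x ^ (i + 2)) γ⟫ := by
    rw [x.symm.inner_map_eq_flip, LinearIsometryEquiv.symm_symm, ← x.pow_succ_apply]
  simp only [inner_add_left, real_inner_smul_left, h1, h2] at hpair
  linarith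

theorem mem_neg_iff_inner_neg (hdom : ∀ a ∈ Φpos, 0 ≤ ⟪e, a⟫) {γ : V} (hγ : γ ∈ Φpos ∪ -Φpos)
    (hne : ⟪e, γ⟫ ≠ 0) : γ ∈ -Φpos ↔ ⟪e, γ⟫ < 0 := by
  refine ⟨fun hneg => lt_of_le_of_ne ?_ hne, fun hlt => hγ.resolve_left fun hpos => ?_⟩
  · simpa [inner_neg_right] using hdom _ (Set.mem_neg.1 hneg)
  · exact (hdom γ hpos).not_gt hlt

theorem inner_pow_ne_zero (hx : x '' (Φpos ∪ -Φpos) = Φpos ∪ -Φpos)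
    (hreg : RegIn (Φpos ∪ -Φpos) (Vtheta x θ) e) {γ : V} (hγ : γ ∈ Φpos ∪ -Φpos)
    (hγΨ : γ ∉ vthetaPerp x θ) (i : ℕ) : ⟪e, (x ^ i) γ⟫ ≠ 0 := fun h0 =>
  hγΨ ((pow_apply_mem_vthetaPerp_iff i).1 (hreg.2 _ (x.pow_apply_mem hx hγ i) h0))

theorem inner_pow_eq_zero_of_mem_vthetaPerp (he : e ∈ Vtheta x θ) {γ : V}
    (hγ : γ ∈ vthetaPerp x θ) (i : ℕ) : ⟪e, (x ^ i) γ⟫ = 0 :=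
  (pow_apply_mem_vthetaPerp_iff i).2 hγ e he

theorem nx_eq_firstNeg (hx : x '' (Φpos ∪ -Φpos) = Φpos ∪ -Φpos)
    (hdom : ∀ a ∈ Φpos, 0 ≤ ⟪e, a⟫) {γ : V} (hγ : γ ∈ Φpos ∪ -Φpos)
    (hne : ∀ i, ⟪e, (x ^ i) γ⟫ ≠ 0) : nx x (-Φpos) γ = firstNeg fun i => ⟪e, (x ^ i) γ⟫ := by
  simp only [nx, firstNeg, mem_neg_iff_inner_neg hdom (x.pow_apply_mem hx hγ _) (hne _)]

theorem nx_add_eq_of_mem_vthetaPerp (hx : x '' (Φpos ∪ -Φpos) = Φpos ∪ -Φpos)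
    (hdom : ∀ a ∈ Φpos, 0 ≤ ⟪e, a⟫) (hreg : RegIn (Φpos ∪ -Φpos) (Vtheta x θ) e) {a b : V}
    (ha : a ∈ vthetaPerp x θ) (hb : b ∈ Φpos) (hbΨ : b ∉ vthetaPerp x θ) (hab : a + b ∈ Φpos) :
    nx x (-Φpos) (a + b) = nx x (-Φpos) b := by
  have habΨ : a + b ∉ vthetaPerp x θ := by rwa [add_mem_cancel_left ha]
  have hseq : (fun i => ⟪e, (x ^ i) (a + b)⟫) = fun i => ⟪e, (x ^ i) b⟫ := by
    funext i
    rw [map_add, inner_add_right, inner_pow_eq_zero_of_mem_vthetaPerp hreg.1 ha, zero_add]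
  rw [nx_eq_firstNeg hx hdom (Or.inl hab) (inner_pow_ne_zero hx hreg (Or.inl hab) habΨ), hseq,
    ← nx_eq_firstNeg hx hdom (Or.inl hb) (inner_pow_ne_zero hx hreg (Or.inl hb) hbΨ)]

theorem nx_add_le_max_of_not_mem_vthetaPerp (hx : x '' (Φpos ∪ -Φpos) = Φpos ∪ -Φpos)
    (hdom : ∀ a ∈ Φpos, 0 ≤ ⟪e, a⟫) (hreg : RegIn (Φpos ∪ -Φpos) (Vtheta x θ) e) {a b : V}
    (ha : a ∈ Φpos) (hb : b ∈ Φpos) (hab : a + b ∈ Φpos)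
    (hna : ∃ i, 1 ≤ i ∧ (x ^ i) a ∈ -Φpos) (hnb : ∃ i, 1 ≤ i ∧ (x ^ i) b ∈ -Φpos)
    (hΨ : ¬(a ∈ vthetaPerp x θ ∧ b ∈ vthetaPerp x θ)) :
    nx x (-Φpos) (a + b) ≤ max (nx x (-Φpos) a) (nx x (-Φpos) b) := by
  by_cases haΨ : a ∈ vthetaPerp x θ
  · rw [nx_add_eq_of_mem_vthetaPerp hx hdom hreg haΨ hb (fun hbΨ => hΨ ⟨haΨ, hbΨ⟩) hab]
    exact le_max_right _ _
  by_cases hbΨ : b ∈ vthetaPerp x θ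
  · rw [add_comm, nx_add_eq_of_mem_vthetaPerp hx hdom hreg hbΨ ha haΨ (by rwa [add_comm])]
    exact le_max_left _ _
  let g : V → ℕ → ℝ := fun γ i => ⟪e, (x ^ i) γ⟫
  have hne : ∀ γ ∈ Φpos, γ ∉ vthetaPerp x θ → ∀ i, g γ i ≠ 0 := fun γ hγ hγΨ =>
    inner_pow_ne_zero hx hreg (Or.inl hγ) hγΨ
  have hpos : ∀ γ ∈ Φpos, γ ∉ vthetaPerp x θ → 0 < g γ 0 := fun γ hγ hγΨ =>
    lt_of_le_of_ne (hdom γ hγ) (hne γ hγ hγΨ 0).symm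
  have hneg : ∀ γ ∈ Φpos, γ ∉ vthetaPerp x θ → (∃ i, 1 ≤ i ∧ (x ^ i) γ ∈ -Φpos) →
      ∃ i, 1 ≤ i ∧ g γ i < 0 := fun γ hγ hγΨ ⟨i, hi, hmem⟩ =>
    ⟨i, hi, (mem_neg_iff_inner_neg hdom (x.pow_apply_mem hx (Or.inl hγ) i) (hne γ hγ hγΨ i)).1 hmem⟩
  have hadd : g (a + b) = g a + g b := funext fun i => by
    simp only [g, map_add, inner_add_right, Pi.add_apply]
  have habΨ : a + b ∉ vthetaPerp x θ := fun h => by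
    have h0 : g (a + b) 0 = 0 := inner_pow_eq_zero_of_mem_vthetaPerp hreg.1 h 0
    rw [hadd, Pi.add_apply] at h0
    linarith [hpos a ha haΨ, hpos b hb hbΨ]
  rw [nx_eq_firstNeg hx hdom (Or.inl hab) (hne _ hab habΨ), nx_eq_firstNeg hx hdom (Or.inl ha)
    (hne a ha haΨ), nx_eq_firstNeg hx hdom (Or.inl hb) (hne b hb hbΨ)]
  change firstNeg (g (a + b)) ≤ max (firstNeg (g a)) (firstNeg (g b))
  rw [hadd]
  exact firstNeg_add_le_max (inner_pow_add_two hreg.1 a) (inner_pow_add_two hreg.1 b)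
    (hpos a ha haΨ) (hpos b hb hbΨ) (hne a ha haΨ) (hne b hb hbΨ) (hadd ▸ hne _ hab habΨ)
    (hneg a ha haΨ hna) (hneg b hb hbΨ hnb)

end InductionStep

theorem nx_add_le_max_of_goodPosI [FiniteDimensional ℝ V] {x : V ≃ₗᵢ[ℝ] V} {l : List ℝ}
    {Φpos : Set V} (hdisj : Disjoint Φpos (-Φpos)) (hx : x '' (Φpos ∪ -Φpos) = Φpos ∪ -Φpos)
    (hadm : AdmissibleI Φpos x l) (hgp : GoodPosI Φpos x l) {a b : V} (ha : a ∈ Φpos)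
    (hb : b ∈ Φpos) (hab : a + b ∈ Φpos) (hna : ∃ i, 1 ≤ i ∧ (x ^ i) a ∈ -Φpos)
    (hnb : ∃ i, 1 ≤ i ∧ (x ^ i) b ∈ -Φpos) :
    nx x (-Φpos) (a + b) ≤ max (nx x (-Φpos) a) (nx x (-Φpos) b) := by
  induction l generalizing Φpos with
  | nil =>
    obtain ⟨-, e, he, hreg⟩ := hadm
    rw [sumV_nil, Set.mem_singleton_iff] at he
    have hfix : x a = a := apply_eq_self_of_regIn hreg (Or.inl ha) (by rw [he, inner_zero_left])
    obtain ⟨i, -, hi⟩ := hna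
    rw [LinearIsometryEquiv.pow_apply_eq_self hfix] at hi
    exact absurd hi (Set.disjoint_left.1 hdisj ha)
  | cons θ t ih =>
    obtain ⟨e, hdom, hreg⟩ := hgp 1 le_rfl (by simp)
    rw [List.take_succ_cons, List.take_zero, sumV_singleton] at hreg
    by_cases hΨ : a ∈ vthetaPerp x θ ∧ b ∈ vthetaPerp x θ
    · have hle := ih (hdisj.mono Set.inter_subset_left (Set.neg_subset_neg.2 Set.inter_subset_left))
        (image_union_neg_inter_vthetaPerp hx) hadm.restrict hgp.restrict ⟨ha, hΨ.1⟩ ⟨hb, hΨ.2⟩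
        ⟨hab, add_mem hΨ.1 hΨ.2⟩ (by simpa only [pow_apply_mem_neg_inter_iff hΨ.1])
        (by simpa only [pow_apply_mem_neg_inter_iff hΨ.2])
      rwa [nx_inter_vthetaPerp hΨ.1, nx_inter_vthetaPerp hΨ.2,
        nx_inter_vthetaPerp (add_mem hΨ.1 hΨ.2)] at hle
    · exact nx_add_le_max_of_not_mem_vthetaPerp hx hdom hreg ha hb hab hna hnb hΨ

theorem quasiConvexI_of_goodPosI [FiniteDimensional ℝ V] {Φpos Δ : Set V} {x : V ≃ₗᵢ[ℝ] V}
    (hdisj : Disjoint Φpos (-Φpos)) (hx : x '' (Φpos ∪ -Φpos) = Φpos ∪ -Φpos)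
    (hord : ∃ m : ℕ, 1 ≤ m ∧ x ^ m = 1) (hΔ : Δ ⊆ Φpos)
    (hcoeff : ∀ γ ∈ Φpos, γ ∈ AddSubmonoid.closure Δ) {l : List ℝ}
    (hadm : AdmissibleI Φpos x l) (hgp : GoodPosI Φpos x l) :
    QuasiConvexI Φpos Δ x ∧ PhiXI x Φpos = {γ ∈ Φpos ∪ -Φpos | x γ = γ} := by
  obtain ⟨m, hm, hxm⟩ := hord
  obtain ⟨E, hdom, hfix, hperp⟩ := exists_dominant_of_goodPosI hadm hgp
  have hneg : ∀ γ ∈ Φpos, x γ ≠ γ → ∃ i, 1 ≤ i ∧ (x ^ i) γ ∈ -Φpos := fun γ hγ =>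
    exists_pow_mem_neg hx hm hxm hdom hfix hperp hγ
  have hphi := phiXI_eq_of_exists_pow_mem_neg hdisj hneg
  have hmoved : ∀ γ ∈ Φpos \ PhiXI x Φpos, x γ ≠ γ := fun γ hγ hγx =>
    hγ.2 (hphi ▸ ⟨Or.inl hγ.1, hγx⟩)
  refine ⟨⟨⟨_, fun a ha => ha.1, phiXI_eq_inter_closure hΔ hcoeff hdom hfix hperp hphi⟩, ?_⟩, hphi⟩
  intro a ha b hb hab _
  exact nx_add_le_max_of_goodPosI hdisj hx hadm hgp ha.1 hb.1 hab
    (hneg a ha.1 (hmoved a ha)) (hneg b hb.1 (hmoved b hb))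

section Inverse

variable {x : V ≃ₗᵢ[ℝ] V}

theorem Vtheta_inv (θ : ℝ) : Vtheta x⁻¹ θ = Vtheta x θ := by
  ext v
  simp only [Vtheta, Set.mem_ofPred_eq, LinearIsometryEquiv.inv_def,
    LinearIsometryEquiv.symm_symm, add_comm]

theorem sumV_inv (l : List ℝ) : sumV x⁻¹ l = sumV x l := by
  simp only [sumV, Vtheta_inv]

theorem inv_apply_eq_self_iff {w : V} : x⁻¹ w = w ↔ x w = w := by
  rw [LinearIsometryEquiv.coe_inv, x.symm_apply_eq, eq_comm]

theorem admissibleI_inv {Φpos : Set V} {l : List ℝ} :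
    AdmissibleI Φpos x⁻¹ l ↔ AdmissibleI Φpos x l := by
  simp only [AdmissibleI, sumV_inv, inv_apply_eq_self_iff]

theorem goodPosI_inv {Φpos : Set V} {l : List ℝ} : GoodPosI Φpos x⁻¹ l ↔ GoodPosI Φpos x l := by
  simp only [GoodPosI, sumV_inv]

theorem image_inv_eq {s : Set V} (hs : x '' s = s) : (x⁻¹ : V ≃ₗᵢ[ℝ] V) '' s = s := by
  conv_lhs => rw [← hs, Set.image_image]
  simp

end Inverse

theorem good_position_convex_general [FiniteDimensional ℝ V]
    (Φpos Δ : Set V) (x : V ≃ₗᵢ[ℝ] V)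
    (hdisj : Disjoint Φpos (-Φpos))
    (hx : x '' (Φpos ∪ -Φpos) = Φpos ∪ -Φpos)
    (hord : ∃ m : ℕ, 1 ≤ m ∧ x ^ m = 1)
    (hΔ : Δ ⊆ Φpos)
    (hcoeff : ∀ γ ∈ Φpos, γ ∈ AddSubmonoid.closure Δ)
    (l : List ℝ) (hadm : AdmissibleI Φpos x l) (hgp : GoodPosI Φpos x l) :
    QuasiConvexI Φpos Δ x ∧ QuasiConvexI Φpos Δ x⁻¹ ∧
      PhiXI x Φpos = {γ ∈ Φpos ∪ -Φpos | x γ = γ} := by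
  obtain ⟨hconv, hphi⟩ := quasiConvexI_of_goodPosI hdisj hx hord hΔ hcoeff hadm hgp
  have hord_inv : ∃ m : ℕ, 1 ≤ m ∧ x⁻¹ ^ m = 1 := by
    obtain ⟨m, hm, hxm⟩ := hord
    exact ⟨m, hm, by rw [inv_pow, hxm, inv_one]⟩
  exact ⟨hconv, (quasiConvexI_of_goodPosI hdisj (image_inv_eq hx) hord_inv hΔ hcoeff
    (admissibleI_inv.2 hadm) (goodPosI_inv.2 hgp)).1, hphi⟩

/-- a good position element is convex, and `Φ(x) = Φ^x`. -/
theorem good_position_convex [FiniteDimensional ℝ V]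
    (Φpos Δ : Set V) (x : V ≃ₗᵢ[ℝ] V)
    (hfin : Φpos.Finite) (hdisj : Disjoint Φpos (-Φpos))
    (hx : x '' (Φpos ∪ -Φpos) = Φpos ∪ -Φpos)
    (hord : ∃ m : ℕ, 1 ≤ m ∧ x ^ m = 1)
    (hΔ : Δ ⊆ Φpos)
    (hcoeff : ∀ γ ∈ Φpos, γ ∈ AddSubmonoid.closure Δ)
    (l : List ℝ) (hadm : AdmissibleI Φpos x l) (hgp : GoodPosI Φpos x l) :
    QuasiConvexI Φpos Δ x ∧ QuasiConvexI Φpos Δ x⁻¹ ∧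
      PhiXI x Φpos = {γ ∈ Φpos ∪ -Φpos | x γ = γ} :=
  good_position_convex_general Φpos Δ x hdisj hx hord hΔ hcoeff l hadm hgp
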